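/- Let n ≥ 2 be an integer, α ∈ [0,1), and let ℰ be a C^n-solution of the Goursat problem for the hyperbolic Ernst equation in D with data {ℰ0, ℰ1} satisfying the data assumptions. Fix k ∈ ℂ ∖ [0,1] and define U(x,y,k) and V(x,y,k) as in the Lax pair, and let Φ(·,·,k) : D → ℂ^{2×2} be the unique continuous solution of Φ(x,y,k) = Φ0(x,k) + ∫_0^y V(x,y',k) Φ(x,y',k) dy', where Φ0(·,k) is the unique continuous solution of Φ0(x,k) = I + ∫_0^x U(x',0,k) Φ0(x',k) dx'. Then det Φ(x,y,k) = Re ℰ(x,y) > 0 for all (x,y) ∈ D; in particular Φ(x,y,k) is invertible for all (x,y) ∈ D. -/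

import Mathlib

open Complex Set MeasureTheory Topology Filter ComplexConjugate

noncomputable section

/-- The triangle `D = {(x,y) : 0 ≤ x, 0 ≤ y, x + y < 1}`. -/
def TriD : Set (ℝ × ℝ) := {p | 0 ≤ p.1 ∧ 0 ≤ p.2 ∧ p.1 + p.2 < 1}

/-- Partial derivative in the first variable. -/
def pdx (f : ℝ → ℝ → ℂ) (x y : ℝ) : ℂ := deriv (fun t => f t y) x

/-- Partial derivative in the second variable. -/
def pdy (f : ℝ → ℝ → ℂ) (x y : ℝ) : ℂ := deriv (fun t => f x t) y

/-- Mixed second partial derivative. -/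
def pdxy (f : ℝ → ℝ → ℂ) (x y : ℝ) : ℂ := pdx (fun a b => pdy f a b) x y

/-- Partial derivative in the first variable (real valued). -/
def pdxR (f : ℝ → ℝ → ℝ) (x y : ℝ) : ℝ := deriv (fun t => f t y) x

/-- Partial derivative in the second variable (real valued). -/
def pdyR (f : ℝ → ℝ → ℝ) (x y : ℝ) : ℝ := deriv (fun t => f x t) y

/-- Mixed second partial derivative (real valued). -/
def pdxyR (f : ℝ → ℝ → ℝ) (x y : ℝ) : ℝ := pdxR (fun a b => pdyR f a b) x y

/-- The hyperbolic Ernst equation at a point. -/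
def ErnstEqAt (E : ℝ → ℝ → ℂ) (x y : ℝ) : Prop :=
  (((E x y).re : ℂ)) * (pdxy E x y - (pdx E x y + pdy E x y) / (2 * (1 - x - y))) =
    pdx E x y * pdy E x y

/-- The Euler–Darboux equation at a point. -/
def EulerDarbouxAt (V : ℝ → ℝ → ℝ) (x y : ℝ) : Prop :=
  pdxyR V x y - (pdxR V x y + pdyR V x y) / (2 * (1 - x - y)) = 0

/-- `λ(x,y,k) = √((k-(1-y))/(k-x))`, principal branch (`Re λ > 0` off the cut). -/
def lam (x y : ℝ) (k : ℂ) : ℂ := ((k - (1 - (y : ℂ))) / (k - (x : ℂ))) ^ (1/2 : ℂ)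

/-- The segment `[0,1]` inside `ℂ`. -/
def seg01 : Set ℂ := (fun t : ℝ => (t : ℂ)) '' Icc 0 1

/-- A `C^n`-solution of the Goursat problem for the hyperbolic Ernst equation in `D`
with data `{E0, E1}`, with regularity exponent `α`. -/
def ErnstSolutionWith (n : ℕ) (α : ℝ) (E : ℝ → ℝ → ℂ) (E0 E1 : ℝ → ℂ) : Prop :=
  ContinuousOn (fun p : ℝ × ℝ => E p.1 p.2) TriD ∧
  ContDiffOn ℝ n (fun p : ℝ × ℝ => E p.1 p.2) (interior TriD) ∧
  (∀ p ∈ interior TriD, ErnstEqAt E p.1 p.2) ∧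
  (∃ g : ℝ × ℝ → ℂ, ContinuousOn g TriD ∧
      ∀ p ∈ interior TriD, g p = ((p.1 ^ α : ℝ) : ℂ) * pdx E p.1 p.2) ∧
  (∃ g : ℝ × ℝ → ℂ, ContinuousOn g TriD ∧
      ∀ p ∈ interior TriD, g p = ((p.2 ^ α : ℝ) : ℂ) * pdy E p.1 p.2) ∧
  (∃ g : ℝ × ℝ → ℂ, ContinuousOn g TriD ∧
      ∀ p ∈ interior TriD, g p = ((p.1 ^ α * p.2 ^ α : ℝ) : ℂ) * pdxy E p.1 p.2) ∧
  (∀ x ∈ Ico (0:ℝ) 1, E x 0 = E0 x) ∧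
  (∀ y ∈ Ico (0:ℝ) 1, E 0 y = E1 y) ∧
  (∀ p ∈ TriD, 0 < (E p.1 p.2).re)

/-- A `C^n`-solution of the Goursat problem for the hyperbolic Ernst equation in `D`
(with regularity exponent `α` existentially quantified over `[0,1)`). -/
def ErnstSolution (n : ℕ) (E : ℝ → ℝ → ℂ) (E0 E1 : ℝ → ℂ) : Prop :=
  ∃ α ∈ Ico (0:ℝ) 1, ErnstSolutionWith n α E E0 E1

/-- A `C^n`-solution of the Goursat problem for the Euler–Darboux equation in `D`
with data `{V0, V1}`, with regularity exponent `α`. -/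
def EDSolutionWith (n : ℕ) (α : ℝ) (V : ℝ → ℝ → ℝ) (V0 V1 : ℝ → ℝ) : Prop :=
  ContinuousOn (fun p : ℝ × ℝ => V p.1 p.2) TriD ∧
  ContDiffOn ℝ n (fun p : ℝ × ℝ => V p.1 p.2) (interior TriD) ∧
  (∀ p ∈ interior TriD, EulerDarbouxAt V p.1 p.2) ∧
  (∃ g : ℝ × ℝ → ℝ, ContinuousOn g TriD ∧
      ∀ p ∈ interior TriD, g p = p.1 ^ α * pdxR V p.1 p.2) ∧
  (∃ g : ℝ × ℝ → ℝ, ContinuousOn g TriD ∧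
      ∀ p ∈ interior TriD, g p = p.2 ^ α * pdyR V p.1 p.2) ∧
  (∃ g : ℝ × ℝ → ℝ, ContinuousOn g TriD ∧
      ∀ p ∈ interior TriD, g p = p.1 ^ α * p.2 ^ α * pdxyR V p.1 p.2) ∧
  (∀ x ∈ Ico (0:ℝ) 1, V x 0 = V0 x) ∧
  (∀ y ∈ Ico (0:ℝ) 1, V 0 y = V1 y)

/-- A `C^n`-solution of the Goursat problem for the Euler–Darboux equation in `D`. -/
def EDSolution (n : ℕ) (V : ℝ → ℝ → ℝ) (V0 V1 : ℝ → ℝ) : Prop :=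
  ∃ α ∈ Ico (0:ℝ) 1, EDSolutionWith n α V V0 V1

/-- The data assumptions (1.5) on a single boundary datum for the Ernst equation. -/
def ErnstData (n : ℕ) (α : ℝ) (E0 : ℝ → ℂ) : Prop :=
  ContinuousOn E0 (Ico 0 1) ∧ ContDiffOn ℝ n E0 (Ioo 0 1) ∧
  (∃ g : ℝ → ℂ, ContinuousOn g (Ico 0 1) ∧
      ∀ x ∈ Ioo (0:ℝ) 1, g x = ((x ^ α : ℝ) : ℂ) * deriv E0 x) ∧
  E0 0 = 1 ∧ (∀ x ∈ Ico (0:ℝ) 1, 0 < (E0 x).re)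

/-- The data assumptions on a single boundary datum for the Euler–Darboux equation. -/
def EDData (n : ℕ) (α : ℝ) (V0 : ℝ → ℝ) : Prop :=
  ContinuousOn V0 (Ico 0 1) ∧ ContDiffOn ℝ n V0 (Ioo 0 1) ∧
  (∃ g : ℝ → ℝ, ContinuousOn g (Ico 0 1) ∧
      ∀ x ∈ Ioo (0:ℝ) 1, g x = x ^ α * deriv V0 x) ∧
  V0 0 = 0

/-- The matrix `U0(x,k)` of the x-part of the Lax pair, built from the boundary datum. -/
def U0mat (E0 : ℝ → ℂ) (x : ℝ) (k : ℂ) : Matrix (Fin 2) (Fin 2) ℂ :=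
  (1 / (2 * ((E0 x).re : ℂ))) •
    !![conj (deriv E0 x), lam x 0 k * conj (deriv E0 x);
       lam x 0 k * deriv E0 x, deriv E0 x]

/-- The matrix `U(x,y,k)` of the Lax pair. -/
def Umat (E : ℝ → ℝ → ℂ) (k : ℂ) (x y : ℝ) : Matrix (Fin 2) (Fin 2) ℂ :=
  (1 / (2 * ((E x y).re : ℂ))) •
    !![conj (pdx E x y), lam x y k * conj (pdx E x y);
       lam x y k * pdx E x y, pdx E x y]

/-- The matrix `V(x,y,k)` of the Lax pair. -/
def Vmat (E : ℝ → ℝ → ℂ) (k : ℂ) (x y : ℝ) : Matrix (Fin 2) (Fin 2) ℂ :=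
  (1 / (2 * ((E x y).re : ℂ))) •
    !![conj (pdy E x y), (lam x y k)⁻¹ * conj (pdy E x y);
       (lam x y k)⁻¹ * pdy E x y, pdy E x y]


/-!
On the edge `y = 0` (for `Φ0`) and on each vertical segment (for `Φ`), the Volterra equation
makes the eigenfunction a solution of a linear system `Φ' = A Φ` with `A = U` or `A = V`, so by
Liouville's formula `(det Φ)' = tr A · det Φ`. The entries carrying `λ` lie off the diagonal,
so `tr A = Re ℰ_t / Re ℰ` is the logarithmic derivative of `Re ℰ` along the segment, and
`det Φ / Re ℰ` is constant there. It is `1` at the origin (`Φ0(0) = I`, `ℰ(0,0) = 1`), hence on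
`y = 0`, and then on every vertical segment since `Φ(x,0) = Φ0(x)`. The weight `t ^ α` with
`α < 1` on `ℰ_t` is what makes `A` integrable up to the edge, so that the Volterra equations can
be differentiated.
-/

theorem eqOn_Ico_of_hasDerivAt_mul_self {𝕜 : Type*} [NontriviallyNormedField 𝕜]
    [NormedAlgebra ℝ 𝕜] {a b : ℝ} {F G p : ℝ → 𝕜}
    (hF : ContinuousOn F (Ico a b)) (hG : ContinuousOn G (Ico a b))
    (hG0 : ∀ t ∈ Ico a b, G t ≠ 0)
    (hF' : ∀ t ∈ Ioo a b, HasDerivAt F (p t * F t) t)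
    (hG' : ∀ t ∈ Ioo a b, HasDerivAt G (p t * G t) t) (ha : F a = G a) :
    EqOn F G (Ico a b) := by
  intro y hy
  have hab : a < b := hy.1.trans_lt hy.2
  have hR : ContinuousOn (F / G) (Ico a b) := hF.div hG hG0
  have hR' : ∀ t ∈ Ioo a b, HasDerivAt (F / G) 0 t := fun t ht => by
    convert (hF' t ht).div (hG' t ht) (hG0 t (Ioo_subset_Ico_self ht)) using 1
    ring
  have hRa : HasDerivWithinAt (F / G) 0 (Ici a) a := by
    refine hasDerivWithinAt_Ici_of_tendsto_deriv (s := Ioo a b)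
      (fun t ht => (hR' t ht).differentiableAt.differentiableWithinAt)
      ((hR a (left_mem_Ico.2 hab)).mono Ioo_subset_Ico_self) (Ioo_mem_nhdsGT hab) ?_
    refine tendsto_const_nhds.congr' ?_
    filter_upwards [Ioo_mem_nhdsGT hab] with t ht using (hR' t ht).deriv.symm
  have hconst : (F / G) y = (F / G) a := by
    refine constant_of_has_deriv_right_zero (hR.mono fun t ht => ⟨ht.1, ht.2.trans_lt hy.2⟩)
      (fun t ht => ?_) y ⟨hy.1, le_rfl⟩
    rcases ht.1.eq_or_lt with rfl | hat
    · exact hRa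
    · exact (hR' t ⟨hat, ht.2.trans hy.2⟩).hasDerivWithinAt
  have hGa := hG0 a (left_mem_Ico.2 hab)
  simp only [Pi.div_apply, ha, div_self hGa] at hconst
  exact (div_eq_one_iff_eq (hG0 y hy)).1 hconst

theorem hasDerivAt_det_fin_two {𝕜 𝔸 : Type*} [NontriviallyNormedField 𝕜] [NormedCommRing 𝔸]
    [NormedAlgebra 𝕜 𝔸] {Φ : 𝕜 → Matrix (Fin 2) (Fin 2) 𝔸} {A : Matrix (Fin 2) (Fin 2) 𝔸}
    {t : 𝕜} (hΦ : ∀ i j, HasDerivAt (fun s => Φ s i j) ((A * Φ t) i j) t) :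
    HasDerivAt (fun s => (Φ s).det) (A.trace * (Φ t).det) t := by
  rw [show (fun s => (Φ s).det) = fun s => Φ s 0 0 * Φ s 1 1 - Φ s 0 1 * Φ s 1 0 from
    funext fun s => Matrix.det_fin_two _]
  refine (((hΦ 0 0).fun_mul (hΦ 1 1)).fun_sub ((hΦ 0 1).fun_mul (hΦ 1 0))).congr_deriv ?_
  simp only [Matrix.mul_apply, Fin.sum_univ_two, Matrix.trace_fin_two, Matrix.det_fin_two]
  ring

theorem hasDerivAt_of_eq_add_integral {E : Type*} [NormedAddCommGroup E] [NormedSpace ℝ E]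
    [CompleteSpace E] {f g : ℝ → E} {a b y : ℝ} {v : E} (hg : ContinuousOn g (Ioo a b))
    (hgi : IntervalIntegrable g volume a y)
    (hf : ∀ t ∈ Ioo a b, f t = v + ∫ s in a..t, g s) (hy : y ∈ Ioo a b) :
    HasDerivAt f (g y) y := by
  have hnhds : Ioo a b ∈ 𝓝 y := isOpen_Ioo.mem_nhds hy
  have hFTC := (intervalIntegral.integral_hasDerivAt_right hgi
    ⟨Ioo a b, hnhds, hg.aestronglyMeasurable measurableSet_Ioo⟩
    (hg.continuousAt hnhds)).const_add v
  exact hFTC.congr_of_eventuallyEq (Filter.eventuallyEq_of_mem hnhds hf)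

theorem intervalIntegrable_of_rpow_smul_eq {E : Type*} [NormedAddCommGroup E] [NormedSpace ℝ E]
    {α y : ℝ} (hα : α < 1) (hy : 0 ≤ y) {f g : ℝ → E} (hg : ContinuousOn g (Icc 0 y))
    (hfg : ∀ t ∈ Ioo 0 y, g t = t ^ α • f t) : IntervalIntegrable f volume 0 y := by
  have hint : IntervalIntegrable (fun t => t ^ (-α) • g t) volume 0 y :=
    (intervalIntegral.intervalIntegrable_rpow' (by linarith)).smul_continuousOn
      (by rwa [uIcc_of_le hy])
  refine hint.congr_uIoo fun t ht => ?_
  rw [uIoo_of_le hy] at ht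
  change t ^ (-α) • g t = f t
  rw [hfg t ht, smul_smul, ← Real.rpow_add ht.1, neg_add_cancel, Real.rpow_zero, one_smul]

theorem Matrix.det_eq_of_volterra_fin_two {𝕜 : Type*} [RCLike 𝕜] {c : ℝ}
    {V Φ : ℝ → Matrix (Fin 2) (Fin 2) 𝕜} {Φi : Matrix (Fin 2) (Fin 2) 𝕜} {G : ℝ → 𝕜}
    (hV : ContinuousOn V (Ioo 0 c))
    (hVi : ∀ y ∈ Ioo 0 c, ∀ i j, IntervalIntegrable (fun t => V t i j) volume 0 y)
    (hΦc : ContinuousOn Φ (Ico 0 c))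
    (hΦeq : ∀ y ∈ Ico 0 c, ∀ i j, Φ y i j = Φi i j + ∫ t in (0:ℝ)..y, (V t * Φ t) i j)
    (hG : ContinuousOn G (Ico 0 c)) (hG0 : ∀ t ∈ Ico 0 c, G t ≠ 0)
    (hG' : ∀ t ∈ Ioo 0 c, HasDerivAt G ((V t).trace * G t) t) (hdet : Φi.det = G 0) :
    EqOn (fun y => (Φ y).det) G (Ico 0 c) := by
  intro y hy
  have hc : 0 < c := hy.1.trans_lt hy.2
  have hentry (i j : Fin 2) : ContinuousOn (fun t => Φ t i j) (Ico 0 c) :=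
    (continuous_id.matrix_elem i j).comp_continuousOn hΦc
  have hΦ' : ∀ t ∈ Ioo 0 c, ∀ i j, HasDerivAt (fun s => Φ s i j) ((V t * Φ t) i j) t := by
    intro t ht i j
    have hcont : ContinuousOn (fun s => (V s * Φ s) i j) (Ioo 0 c) :=
      (continuous_id.matrix_elem i j).comp_continuousOn (hV.mul (hΦc.mono Ioo_subset_Ico_self))
    refine hasDerivAt_of_eq_add_integral hcont ?_
      (fun s hs => hΦeq s (Ioo_subset_Ico_self hs) i j) ht
    have hsub : uIcc 0 t ⊆ Ico 0 c := by
      rw [uIcc_of_le ht.1.le]; exact fun s hs => ⟨hs.1, hs.2.trans_lt ht.2⟩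
    simp only [Matrix.mul_apply, Fin.sum_univ_two]
    exact ((hVi t ht i 0).mul_continuousOn ((hentry 0 j).mono hsub)).add
      ((hVi t ht i 1).mul_continuousOn ((hentry 1 j).mono hsub))
  have hΦ0 : Φ 0 = Φi := Matrix.ext fun i j => by
    rw [hΦeq 0 (left_mem_Ico.2 hc), intervalIntegral.integral_same, add_zero]
  refine eqOn_Ico_of_hasDerivAt_mul_self (continuous_id.matrix_det.comp_continuousOn hΦc) hG hG0
    (fun t ht => hasDerivAt_det_fin_two (hΦ' t ht)) hG' ?_ hy
  change (Φ 0).det = G 0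
  rw [hΦ0, hdet]

/-- `Umat` and `Vmat` are `laxMatrix` with `L = λ` and `L = λ⁻¹` respectively. -/
def laxMatrix (r : ℝ) (L q : ℂ) : Matrix (Fin 2) (Fin 2) ℂ :=
  (1 / (2 * (r : ℂ))) • !![conj q, L * conj q; L * q, q]

theorem trace_laxMatrix {r : ℝ} (hr : r ≠ 0) (L q : ℂ) :
    (laxMatrix r L q).trace = q.re / r := by
  have hr' : (r : ℂ) ≠ 0 := ofReal_ne_zero.2 hr
  rw [laxMatrix, Matrix.trace_fin_two]
  simp only [Matrix.smul_apply, Matrix.of_apply, Matrix.cons_val', Matrix.cons_val_zero,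
    Matrix.cons_val_one, Matrix.empty_val', Matrix.cons_val_fin_one, smul_eq_mul]
  rw [re_eq_add_conj]
  field_simp
  ring

theorem laxMatrix_ofReal_mul (r : ℝ) (L q : ℂ) (s : ℝ) :
    laxMatrix r L ((s : ℂ) * q) = s • laxMatrix r L q := by
  ext i j
  fin_cases i <;> fin_cases j <;>
    simp [laxMatrix, Complex.real_smul] <;> ring

theorem ContinuousOn.laxMatrix {s : Set ℝ} {r : ℝ → ℝ} {L q : ℝ → ℂ} (hr : ContinuousOn r s)
    (hr0 : ∀ t ∈ s, r t ≠ 0) (hL : ContinuousOn L s) (hq : ContinuousOn q s) :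
    ContinuousOn (fun t => laxMatrix (r t) (L t) (q t)) s := by
  have hinv : ContinuousOn (fun t => 1 / (2 * (r t : ℂ))) s :=
    continuousOn_const.div (continuousOn_const.mul (continuous_ofReal.comp_continuousOn hr))
      fun t ht => by simpa using hr0 t ht
  refine hinv.smul (continuousOn_pi.2 fun i => continuousOn_pi.2 fun j => ?_)
  fin_cases i <;> fin_cases j
  · exact hq.star
  · exact hL.mul hq.star
  · exact hL.mul hq
  · exact hq

theorem div_mem_slitPlane_of_notMem_seg01 {k : ℂ} (hk : k ∉ seg01) {a b : ℝ}
    (ha : a ∈ Icc (0:ℝ) 1) (hb : b ∈ Icc (0:ℝ) 1) : (k - a) / (k - b) ∈ slitPlane := by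
  have hkb : k - b ≠ 0 := sub_ne_zero.2 fun h => hk ⟨b, hb, h.symm⟩
  rw [mem_slitPlane_iff]
  by_contra! hw
  set r := ((k - a) / (k - b)).re
  have hr : (k - a) / (k - b) = r := ext rfl hw.2
  have h1r : 0 < 1 - r := by linarith [hw.1]
  -- a nonpositive ratio `r` puts `k = (a - r b) / (1 - r)` between `a` and `b`
  have hkr : k = ((a - r * b) / (1 - r) : ℝ) := by
    rw [div_eq_iff hkb] at hr
    rw [ofReal_div, eq_div_iff (ofReal_ne_zero.2 h1r.ne')]
    push_cast
    linear_combination hr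
  refine hk ⟨(a - r * b) / (1 - r), ⟨div_nonneg ?_ h1r.le, (div_le_one h1r).2 ?_⟩, hkr.symm⟩
  · nlinarith [ha.1, hb.1]
  · nlinarith [ha.2, hb.2]

theorem lam_radicand_mem_slitPlane {k : ℂ} (hk : k ∉ seg01) {x y : ℝ} (hx : x ∈ Icc (0:ℝ) 1)
    (hy : y ∈ Icc (0:ℝ) 1) : (k - (1 - (y : ℂ))) / (k - x) ∈ slitPlane := by
  have h1y : 1 - y ∈ Icc (0:ℝ) 1 := ⟨by linarith [hy.2], by linarith [hy.1]⟩
  simpa using div_mem_slitPlane_of_notMem_seg01 hk h1y hx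

theorem continuousOn_lam {k : ℂ} (hk : k ∉ seg01) :
    ContinuousOn (fun p : ℝ × ℝ => lam p.1 p.2 k) (Icc 0 1 ×ˢ Icc 0 1) := by
  refine ContinuousOn.cpow_const (ContinuousOn.div (by fun_prop) (by fun_prop) fun p hp => ?_)
    fun p hp => lam_radicand_mem_slitPlane hk hp.1 hp.2
  exact sub_ne_zero.2 fun h => hk ⟨p.1, hp.1, h.symm⟩

theorem lam_ne_zero {k : ℂ} (hk : k ∉ seg01) {x y : ℝ} (hx : x ∈ Icc (0:ℝ) 1)
    (hy : y ∈ Icc (0:ℝ) 1) : lam x y k ≠ 0 := by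
  rw [lam, Ne, cpow_eq_zero_iff, not_and_or]
  exact Or.inl (slitPlane_ne_zero (lam_radicand_mem_slitPlane hk hx hy))

def IsWeightedC1On (α c : ℝ) (e : ℝ → ℂ) : Prop :=
  ContinuousOn e (Ico 0 c) ∧ ContDiffOn ℝ 1 e (Ioo 0 c) ∧
  ∃ g : ℝ → ℂ, ContinuousOn g (Ico 0 c) ∧ ∀ t ∈ Ioo 0 c, g t = ((t ^ α : ℝ) : ℂ) * deriv e t

theorem det_eq_re_of_volterra_laxMatrix {α c : ℝ} (hα : α < 1) {e L : ℝ → ℂ}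
    (he : IsWeightedC1On α c e) (hpos : ∀ t ∈ Ico 0 c, 0 < (e t).re)
    (hL : ContinuousOn L (Ico 0 c)) {Φ : ℝ → Matrix (Fin 2) (Fin 2) ℂ}
    {Φi : Matrix (Fin 2) (Fin 2) ℂ} (hΦc : ContinuousOn Φ (Ico 0 c))
    (hΦeq : ∀ y ∈ Ico 0 c, ∀ i j, Φ y i j =
      Φi i j + ∫ t in (0:ℝ)..y, (laxMatrix (e t).re (L t) (deriv e t) * Φ t) i j)
    (hdet : Φi.det = (e 0).re) :
    EqOn (fun y => (Φ y).det) (fun y => ((e y).re : ℂ)) (Ico 0 c) := by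
  obtain ⟨hec, hed, g, hgc, hg⟩ := he
  have hre : ContinuousOn (fun t => (e t).re) (Ico 0 c) := continuous_re.comp_continuousOn hec
  have hre0 : ∀ t ∈ Ico 0 c, (e t).re ≠ 0 := fun t ht => (hpos t ht).ne'
  have hdiff : ∀ t ∈ Ioo 0 c, HasDerivAt e (deriv e t) t := fun t ht =>
    ((hed.differentiableOn one_ne_zero t ht).differentiableAt
      (isOpen_Ioo.mem_nhds ht)).hasDerivAt
  refine Matrix.det_eq_of_volterra_fin_two ?_ ?_ hΦc hΦeq
    (continuous_ofReal.comp_continuousOn hre) (fun t ht => ofReal_ne_zero.2 (hre0 t ht))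
    (fun t ht => ?_) hdet
  · exact ContinuousOn.laxMatrix (hre.mono Ioo_subset_Ico_self)
      (fun t ht => hre0 t (Ioo_subset_Ico_self ht)) (hL.mono Ioo_subset_Ico_self)
      (hed.continuousOn_deriv_of_isOpen isOpen_Ioo le_rfl)
  · -- `t ^ α` times the Lax matrix is the Lax matrix built from `g`, continuous up to `t = 0`
    intro y hy i j
    have hsub : Icc 0 y ⊆ Ico 0 c := fun t ht => ⟨ht.1, ht.2.trans_lt hy.2⟩
    have hG := ContinuousOn.laxMatrix (hre.mono hsub) (fun t ht => hre0 t (hsub ht))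
      (hL.mono hsub) (hgc.mono hsub)
    refine intervalIntegrable_of_rpow_smul_eq hα hy.1.le
      ((continuous_id.matrix_elem i j).comp_continuousOn hG) fun t ht => ?_
    simp only [Function.comp_apply, id, hg t ⟨ht.1, ht.2.trans hy.2⟩, laxMatrix_ofReal_mul,
      Matrix.smul_apply]
  · have hret : HasDerivAt (fun s => ((e s).re : ℂ)) ((deriv e t).re : ℂ) t :=
      (ofRealCLM.hasFDerivAt.comp_hasDerivAt t
        (reCLM.hasFDerivAt.comp_hasDerivAt t (hdiff t ht)))
    refine hret.congr_deriv ?_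
    rw [trace_laxMatrix (hre0 t (Ioo_subset_Ico_self ht)),
      div_mul_cancel₀ _ (ofReal_ne_zero.2 (hre0 t (Ioo_subset_Ico_self ht)))]

theorem TriD_subset_Icc_prod : TriD ⊆ Icc 0 1 ×ˢ Icc 0 1 := by
  rintro p ⟨hx, hy, hxy⟩
  exact ⟨⟨hx, by linarith⟩, ⟨hy, by linarith⟩⟩

theorem mapsTo_TriD_horizontal : MapsTo (fun t : ℝ => (t, (0:ℝ))) (Ico 0 1) TriD :=
  fun t ht => ⟨ht.1, le_rfl, by simpa using ht.2⟩

theorem mapsTo_TriD_vertical {x : ℝ} (hx : 0 ≤ x) :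
    MapsTo (fun t : ℝ => (x, t)) (Ico 0 (1 - x)) TriD :=
  fun t ht => ⟨hx, ht.1, by linarith [ht.2]⟩

theorem mem_interior_TriD {x y : ℝ} (hx : 0 < x) (hy : 0 < y) (hxy : x + y < 1) :
    (x, y) ∈ interior TriD := by
  refine interior_maximal (t := {p : ℝ × ℝ | 0 < p.1 ∧ 0 < p.2 ∧ p.1 + p.2 < 1}) ?_ ?_
    ⟨hx, hy, hxy⟩
  · rintro p ⟨hp1, hp2, hp12⟩
    exact ⟨hp1.le, hp2.le, hp12⟩
  · exact (isOpen_lt continuous_const continuous_fst).inter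
      ((isOpen_lt continuous_const continuous_snd).inter
        (isOpen_lt (continuous_fst.add continuous_snd) continuous_const))

theorem ErnstData.isWeightedC1On {n : ℕ} {α : ℝ} {E0 e : ℝ → ℂ} (hn : 1 ≤ n)
    (hd : ErnstData n α E0) (he : EqOn e E0 (Ico 0 1)) : IsWeightedC1On α 1 e := by
  obtain ⟨hc, hcd, ⟨g, hgc, hg⟩, -, -⟩ := hd
  have hderiv : ∀ t ∈ Ioo (0:ℝ) 1, deriv e t = deriv E0 t := fun t ht =>
    Filter.EventuallyEq.deriv_eq (Filter.eventuallyEq_of_mem (isOpen_Ioo.mem_nhds ht)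
      (he.mono Ioo_subset_Ico_self))
  refine ⟨hc.congr he, ?_, g, hgc, fun t ht => by rw [hderiv t ht, hg t ht]⟩
  exact (hcd.of_le (by exact_mod_cast hn)).congr (he.mono Ioo_subset_Ico_self)

theorem ErnstSolutionWith.isWeightedC1On_vertical {n : ℕ} {α : ℝ} {E : ℝ → ℝ → ℂ}
    {E0 E1 : ℝ → ℂ} (hn : 1 ≤ n) (hE : ErnstSolutionWith n α E E0 E1)
    (hd1 : ErnstData n α E1) {x : ℝ} (hx : x ∈ Ico 0 1) :
    IsWeightedC1On α (1 - x) (fun t => E x t) := by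
  obtain ⟨hEc, hEd, -, -, ⟨g, hgc, hg⟩, -, -, hE1, -⟩ := hE
  rcases hx.1.eq_or_lt with rfl | hx0
  · rw [sub_zero]
    exact hd1.isWeightedC1On hn hE1
  have hint : MapsTo (fun t : ℝ => (x, t)) (Ioo 0 (1 - x)) (interior TriD) :=
    fun t ht => mem_interior_TriD hx0 ht.1 (by linarith [ht.2])
  refine ⟨hEc.comp (by fun_prop) (mapsTo_TriD_vertical hx.1), ?_, fun t => g (x, t),
    hgc.comp (by fun_prop) (mapsTo_TriD_vertical hx.1), fun t ht => hg (x, t) (hint ht)⟩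
  exact (hEd.comp (by fun_prop) hint).of_le (by exact_mod_cast hn)

/-- The determinant of the eigenfunction Φ of the Lax pair equals
Re ℰ(x,y) > 0 on D; in particular Φ(x,y,k) is invertible on D. -/
theorem volterra_eigenfunction_det
    (n : ℕ) (hn : 2 ≤ n) (α : ℝ) (hα : α ∈ Ico (0:ℝ) 1)
    (E0 E1 : ℝ → ℂ) (hd0 : ErnstData n α E0) (hd1 : ErnstData n α E1)
    (E : ℝ → ℝ → ℂ) (hE : ErnstSolutionWith n α E E0 E1)
    (k : ℂ) (hk : k ∉ seg01)
    (Φ0 : ℝ → Matrix (Fin 2) (Fin 2) ℂ)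
    (hΦ0c : ContinuousOn Φ0 (Ico 0 1))
    (hΦ0eq : ∀ x ∈ Ico (0:ℝ) 1, ∀ i j, Φ0 x i j =
      (1 : Matrix (Fin 2) (Fin 2) ℂ) i j + ∫ t in (0:ℝ)..x, (Umat E k t 0 * Φ0 t) i j)
    (Φ : ℝ → ℝ → Matrix (Fin 2) (Fin 2) ℂ)
    (hΦc : ContinuousOn (fun p : ℝ × ℝ => Φ p.1 p.2) TriD)
    (hΦeq : ∀ p ∈ TriD, ∀ i j, Φ p.1 p.2 i j =
      Φ0 p.1 i j + ∫ t in (0:ℝ)..p.2, (Vmat E k p.1 t * Φ p.1 t) i j) :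
    ∀ p ∈ TriD,
      (Φ p.1 p.2).det = ((E p.1 p.2).re : ℂ) ∧
      0 < (E p.1 p.2).re ∧
      IsUnit (Φ p.1 p.2) := by
  have hn1 : 1 ≤ n := by omega
  obtain ⟨-, -, -, -, -, -, hE0, -, hEpos⟩ := id hE
  have hE00 : (1 : Matrix (Fin 2) (Fin 2) ℂ).det = ((E 0 0).re : ℂ) := by
    simp [hE0 0 ⟨le_rfl, one_pos⟩, hd0.2.2.2.1]
  have hΦ0det : EqOn (fun x => (Φ0 x).det) (fun x => ((E x 0).re : ℂ)) (Ico 0 1) :=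
    det_eq_re_of_volterra_laxMatrix hα.2 (hd0.isWeightedC1On hn1 hE0)
      (fun t ht => hEpos _ (mapsTo_TriD_horizontal ht))
      ((continuousOn_lam hk).comp (by fun_prop)
        (mapsTo_TriD_horizontal.mono_right TriD_subset_Icc_prod))
      hΦ0c hΦ0eq hE00
  rintro ⟨x, y⟩ hp
  have hx : x ∈ Ico 0 1 := ⟨hp.1, by linarith [hp.2.1, hp.2.2]⟩
  have hline := mapsTo_TriD_vertical (x := x) hp.1
  have hlam : ContinuousOn (fun t => (lam x t k)⁻¹) (Ico 0 (1 - x)) :=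
    ((continuousOn_lam hk).comp (by fun_prop) (hline.mono_right TriD_subset_Icc_prod)).inv₀
      fun t ht => lam_ne_zero hk (TriD_subset_Icc_prod (hline ht)).1
        (TriD_subset_Icc_prod (hline ht)).2
  have hΦline : ContinuousOn (fun t => Φ x t) (Ico 0 (1 - x)) := hΦc.comp (by fun_prop) hline
  have hdet : (Φ x y).det = ((E x y).re : ℂ) :=
    det_eq_re_of_volterra_laxMatrix hα.2 (hE.isWeightedC1On_vertical hn1 hd1 hx)
      (fun t ht => hEpos _ (hline ht)) hlam hΦline (fun t ht => hΦeq (x, t) (hline ht))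
      (hΦ0det hx) ⟨hp.2.1, by linarith [hp.2.2]⟩
  refine ⟨hdet, hEpos _ hp, ?_⟩
  rw [Matrix.isUnit_iff_isUnit_det, hdet]
  exact (ofReal_ne_zero.2 (hEpos _ hp).ne').isUnit
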